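/- arXiv:1408.1181 — 6 statements merged into one kernel-verified Lean document; each statement's English description precedes it below -/
import Mathlib

section
/- Let C be a 2-analogue of the Fano plane in F_2^7 and S a fixed 4-dimensional subspace containing no member of C. Let a_i = #{U ∈ C : dim(U ∩ S) = i}. Then (a_0, a_1, a_2, a_3) = (136, 210, 35, 0). -/
/-!
Over `𝔽₂` the points of `ℙ(W)` are the nonzero vectors of `W`, and two distinct nonzero vectors
span a plane. So the codewords, seen as sets of 7 points, form a linear space on the 127 points of
`ℙ⁶`: any two distinct points lie on exactly one codeword. Double counting then gives 21 codewords
through every point and `381 · 7 = 127 · 21` codewords. A codeword meeting `S` in dimension `j` has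
`2ʲ - 1` points in `S`, so counting the incident pairs (point of `S`, codeword) and
(ordered pair of distinct points of `S`, codeword) gives `a₁ + 3a₂ + 7a₃ = 15 · 21` and
`6a₂ + 42a₃ = 15 · 14`. Since no codeword lies in `S`, `a₃ = 0`, and with `a₀ + a₁ + a₂ = 381`
the system has the unique solution `(136, 210, 35)`.
-/

open Finset Module Submodule

section NonzeroVectors

variable {K V : Type*} [DivisionRing K] [AddCommGroup V] [Module K V] [Fintype V]

open Classical in
noncomputable def Submodule.nonzeroVectors (W : Submodule K V) : Finset V := {x | x ∈ W ∧ x ≠ 0}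

@[simp]
theorem Submodule.mem_nonzeroVectors {W : Submodule K V} {x : V} :
    x ∈ W.nonzeroVectors ↔ x ∈ W ∧ x ≠ 0 := by
  simp [nonzeroVectors]

theorem Submodule.nonzeroVectors_inf [DecidableEq V] (U W : Submodule K V) :
    (U ⊓ W).nonzeroVectors = U.nonzeroVectors ∩ W.nonzeroVectors := by
  ext x
  simp only [mem_nonzeroVectors, mem_inf, Finset.mem_inter]
  tauto

theorem Submodule.nonzeroVectors_mono {U W : Submodule K V} (h : U ≤ W) :
    U.nonzeroVectors ⊆ W.nonzeroVectors := fun _ hx => by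
  rw [mem_nonzeroVectors] at hx ⊢
  exact ⟨h hx.1, hx.2⟩

theorem Submodule.card_nonzeroVectors [Fintype K] (W : Submodule K V) :
    #W.nonzeroVectors = Fintype.card K ^ finrank K W - 1 := by
  classical
  have hW : Nat.card W = #{x | x ∈ W} := by
    rw [Nat.card_eq_fintype_card, Fintype.card_subtype]
  have hW' : W.nonzeroVectors = ({x | x ∈ W} : Finset V).erase 0 := by
    ext x; simp [and_comm]
  rw [hW', card_erase_of_mem (by simp), ← hW, natCard_eq_pow_finrank (K := K),
    Nat.card_eq_fintype_card]

end NonzeroVectors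

section Char2

variable {V : Type*} [AddCommGroup V] [Module (ZMod 2) V]

theorem finrank_span_pair_eq_two {x y : V} (hx : x ≠ 0) (hy : y ≠ 0) (hxy : x ≠ y) :
    finrank (ZMod 2) (span (ZMod 2) {x, y}) = 2 := by
  have hli : LinearIndependent (ZMod 2) ![x, y] := by
    rw [LinearIndependent.pair_iff]
    intro s t hst
    have h01 : ∀ s : ZMod 2, s = 0 ∨ s = 1 := by decide
    rcases h01 s with rfl | rfl <;> rcases h01 t with rfl | rfl <;>
      simp_all [add_eq_zero_iff_eq_neg, ZModModule.neg_eq_self]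
  have h := finrank_span_eq_card hli
  rwa [Matrix.range_cons_cons_empty, Fintype.card_fin] at h

end Char2

section LinearSpace

variable {α ι : Type*} [DecidableEq α] {P Q : Finset α} {B : Finset ι} {blk : ι → Finset α}

theorem sum_card_inter_mul_eq {m n : ℕ} (h : ∀ x ∈ Q, #{i ∈ B | x ∈ blk i} * m = n) :
    (∑ i ∈ B, #(blk i ∩ Q)) * m = #Q * n := by
  have h' := sum_card_bipartiteAbove_eq_sum_card_bipartiteBelow (s := B) (t := Q)
    (fun i x => x ∈ blk i)
  simp only [bipartiteAbove, bipartiteBelow, filter_mem_eq_inter, inter_comm Q] at h'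
  rw [h', sum_mul, sum_congr rfl h, sum_const, smul_eq_mul]

variable (hpair : ∀ x ∈ P, ∀ y ∈ P, x ≠ y → #{i ∈ B | x ∈ blk i ∧ y ∈ blk i} = 1)
include hpair

theorem card_filter_mem_mul_eq {k : ℕ} (hsub : ∀ i ∈ B, blk i ⊆ P)
    (hk : ∀ i ∈ B, #(blk i) = k) {x : α} (hx : x ∈ P) :
    #{i ∈ B | x ∈ blk i} * (k - 1) = #P - 1 := by
  have h := card_mul_eq_card_mul (s := {i ∈ B | x ∈ blk i}) (t := P.erase x)
    (fun i y => y ∈ blk i) (m := k - 1) (n := 1) ?_ ?_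
  · rwa [mul_one, card_erase_of_mem hx] at h
  · intro i hi
    rw [mem_filter] at hi
    rw [bipartiteAbove, ← hk i hi.1, ← card_erase_of_mem hi.2]
    congr 1
    ext y
    simp only [mem_filter, mem_erase]
    exact ⟨fun h => ⟨h.1.1, h.2⟩, fun h => ⟨⟨h.1, hsub i hi.1 h.2⟩, h.2⟩⟩
  · intro y hy
    rw [mem_erase] at hy
    rw [bipartiteBelow, filter_filter, ← hpair x hx y hy.2 hy.1.symm]

theorem sum_card_offDiag_inter_eq (hQ : Q ⊆ P) :
    ∑ i ∈ B, #(blk i ∩ Q).offDiag = #Q.offDiag := by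
  have h := sum_card_bipartiteAbove_eq_sum_card_bipartiteBelow (s := Q.offDiag) (t := B)
    (fun p i => p.1 ∈ blk i ∧ p.2 ∈ blk i)
  simp only [bipartiteAbove, bipartiteBelow] at h
  calc ∑ i ∈ B, #(blk i ∩ Q).offDiag
      = ∑ i ∈ B, #{p ∈ Q.offDiag | p.1 ∈ blk i ∧ p.2 ∈ blk i} := by
        refine sum_congr rfl fun i _ => congrArg card ?_
        ext p
        simp only [mem_offDiag, mem_inter, mem_filter]
        tauto
    _ = ∑ p ∈ Q.offDiag, 1 := by
        rw [← h]
        refine sum_congr rfl fun p hp => ?_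
        rw [mem_offDiag] at hp
        exact hpair p.1 (hQ hp.1) p.2 (hQ hp.2.1) hp.2.2
    _ = #Q.offDiag := (card_eq_sum_ones _).symm

end LinearSpace

theorem sum_comp_eq_sum_range_card_filter_smul {ι M : Type*} [AddCommMonoid M] {s : Finset ι}
    {g : ι → ℕ} {n : ℕ} (hg : ∀ i ∈ s, g i < n) (f : ℕ → M) :
    ∑ i ∈ s, f (g i) = ∑ j ∈ range n, #{i ∈ s | g i = j} • f j := by
  rw [← sum_fiberwise_of_maps_to fun i hi => mem_range.2 (hg i hi)]
  exact sum_congr rfl fun j _ => by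
    rw [sum_congr rfl fun i hi => by rw [(mem_filter.1 hi).2], sum_const]

section SubspaceDesign

variable {V : Type*} [AddCommGroup V] [Module (ZMod 2) V] [Fintype V]

theorem Submodule.card_nonzeroVectors_two (W : Submodule (ZMod 2) V) :
    #W.nonzeroVectors = 2 ^ finrank (ZMod 2) W - 1 := by
  rw [card_nonzeroVectors, ZMod.card]

theorem Submodule.card_offDiag_nonzeroVectors_two (W : Submodule (ZMod 2) V) :
    #W.nonzeroVectors.offDiag =
      (2 ^ finrank (ZMod 2) W - 1) * (2 ^ finrank (ZMod 2) W - 2) := by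
  rw [offDiag_card, card_nonzeroVectors_two, ← Nat.mul_sub_one, Nat.sub_sub]

variable [DecidableEq V] {C : Finset (Submodule (ZMod 2) V)}
  (hSteiner : ∀ T : Submodule (ZMod 2) V, finrank (ZMod 2) T = 2 → ∃! U, U ∈ C ∧ T ≤ U)
include hSteiner

theorem card_filter_mem_nonzeroVectors_pair_eq_one :
    ∀ x ∈ (⊤ : Submodule (ZMod 2) V).nonzeroVectors,
      ∀ y ∈ (⊤ : Submodule (ZMod 2) V).nonzeroVectors, x ≠ y →
        #{U ∈ C | x ∈ U.nonzeroVectors ∧ y ∈ U.nonzeroVectors} = 1 := by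
  intro x hx y hy hxy
  rw [mem_nonzeroVectors] at hx hy
  obtain ⟨U, hU, huniq⟩ := hSteiner _ (finrank_span_pair_eq_two hx.2 hy.2 hxy)
  have hspan : ∀ W : Submodule (ZMod 2) V, span (ZMod 2) {x, y} ≤ W ↔ x ∈ W ∧ y ∈ W := by
    simp [span_le, Set.insert_subset_iff]
  rw [card_eq_one]
  refine ⟨U, ext fun W => ?_⟩
  simp only [mem_filter, mem_nonzeroVectors, mem_singleton]
  constructor
  · rintro ⟨hW, ⟨hxW, -⟩, hyW, -⟩
    exact huniq W ⟨hW, (hspan W).2 ⟨hxW, hyW⟩⟩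
  · rintro rfl
    exact ⟨hU.1, ⟨((hspan W).1 hU.2).1, hx.2⟩, ((hspan W).1 hU.2).2, hy.2⟩

theorem sum_two_pow_finrank_inf_sub_one_mul_sub_two (S : Submodule (ZMod 2) V) :
    ∑ U ∈ C, (2 ^ finrank (ZMod 2) ↥(U ⊓ S) - 1) * (2 ^ finrank (ZMod 2) ↥(U ⊓ S) - 2) =
      (2 ^ finrank (ZMod 2) S - 1) * (2 ^ finrank (ZMod 2) S - 2) := by
  simp only [← card_offDiag_nonzeroVectors_two, nonzeroVectors_inf]
  exact sum_card_offDiag_inter_eq (card_filter_mem_nonzeroVectors_pair_eq_one hSteiner)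
    (nonzeroVectors_mono le_top)

variable (h3 : ∀ U ∈ C, finrank (ZMod 2) U = 3)
include h3

theorem card_filter_mem_mul_six {x : V} (hx : x ≠ 0) :
    #{U ∈ C | x ∈ U.nonzeroVectors} * 6 = 2 ^ finrank (ZMod 2) V - 2 := by
  have h := card_filter_mem_mul_eq (card_filter_mem_nonzeroVectors_pair_eq_one hSteiner)
    (fun U _ => nonzeroVectors_mono le_top)
    (fun U hU => by rw [card_nonzeroVectors_two, h3 U hU]) (x := x) (by simp [hx])
  simpa [hx, card_nonzeroVectors_two, finrank_top, Nat.sub_sub] using h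

theorem sum_two_pow_finrank_inf_sub_one_mul_six (S : Submodule (ZMod 2) V) :
    (∑ U ∈ C, (2 ^ finrank (ZMod 2) ↥(U ⊓ S) - 1)) * 6 =
      (2 ^ finrank (ZMod 2) S - 1) * (2 ^ finrank (ZMod 2) V - 2) := by
  simp only [← card_nonzeroVectors_two, nonzeroVectors_inf]
  exact sum_card_inter_mul_eq fun x hx =>
    card_filter_mem_mul_six hSteiner h3 (mem_nonzeroVectors.1 hx).2

end SubspaceDesign

/-- Intersection vector of a solid containing no codeword, with respect to a `2`-analogue of
the Fano plane: `(a_0, a_1, a_2, a_3) = (136, 210, 35, 0)`. -/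
theorem fano_analogue_intersection_vector_no_codeword
    (C : Set (Submodule (ZMod 2) (Fin 7 → ZMod 2)))
    (h3 : ∀ U ∈ C, Module.finrank (ZMod 2) U = 3)
    (hSteiner : ∀ T : Submodule (ZMod 2) (Fin 7 → ZMod 2),
      Module.finrank (ZMod 2) T = 2 → ∃! U, U ∈ C ∧ T ≤ U)
    (S : Submodule (ZMod 2) (Fin 7 → ZMod 2)) (hS : Module.finrank (ZMod 2) S = 4)
    (hno : ∀ U ∈ C, ¬ U ≤ S) :
    {U ∈ C | Module.finrank (ZMod 2) ↥(U ⊓ S) = 0}.ncard = 136 ∧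
    {U ∈ C | Module.finrank (ZMod 2) ↥(U ⊓ S) = 1}.ncard = 210 ∧
    {U ∈ C | Module.finrank (ZMod 2) ↥(U ⊓ S) = 2}.ncard = 35 ∧
    {U ∈ C | Module.finrank (ZMod 2) ↥(U ⊓ S) = 3}.ncard = 0 := by
  classical
  set B := C.toFinset
  have hB3 : ∀ U ∈ B, finrank (ZMod 2) U = 3 := fun U hU => h3 U (Set.mem_toFinset.1 hU)
  have hBSteiner : ∀ T : Submodule (ZMod 2) (Fin 7 → ZMod 2),
      finrank (ZMod 2) T = 2 → ∃! U, U ∈ B ∧ T ≤ U := by simpa [B] using hSteiner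
  have hlt : ∀ U ∈ B, finrank (ZMod 2) ↥(U ⊓ S) < 3 := fun U hU =>
    hB3 U hU ▸ finrank_lt_finrank_of_lt (inf_lt_left.2 (hno U (Set.mem_toFinset.1 hU)))
  have hfib (f : ℕ → ℕ) := sum_comp_eq_sum_range_card_filter_smul hlt f
  have hB := sum_two_pow_finrank_inf_sub_one_mul_six hBSteiner hB3 ⊤
  have h1 := sum_two_pow_finrank_inf_sub_one_mul_six hBSteiner hB3 S
  have h2 := sum_two_pow_finrank_inf_sub_one_mul_sub_two hBSteiner S
  have h0 := (card_eq_sum_ones B).trans (hfib fun _ => 1)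
  rw [sum_congr rfl fun U hU => by rw [inf_top_eq, hB3 U hU], sum_const] at hB
  rw [hfib fun d => 2 ^ d - 1] at h1
  rw [hfib fun d => (2 ^ d - 1) * (2 ^ d - 2)] at h2
  have hncard (j : ℕ) : {U ∈ C | finrank (ZMod 2) ↥(U ⊓ S) = j}.ncard =
      #{U ∈ B | finrank (ZMod 2) ↥(U ⊓ S) = j} := by
    rw [← Set.ncard_coe_finset]; congr 1; ext U; simp [B]
  have hempty : #{U ∈ B | finrank (ZMod 2) ↥(U ⊓ S) = 3} = 0 :=
    card_eq_zero.2 (filter_false_of_mem fun U hU => (hlt U hU).ne)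
  simp only [hncard, hempty]
  norm_num [sum_range_succ, hS] at h0 hB h1 h2 ⊢
  omega
end

section
/- Let C be a 2-analogue of the Fano plane in F_2^7 and S a fixed 4-dimensional subspace containing a member of C. With a_i = #{U ∈ C : dim(U∩S) = i}, the intersection vector is (a_0, a_1, a_2, a_3) = (128, 224, 28, 1). -/
/-!
Double counting. Counting planes shows that `C` has `2667 / 7 = 381` blocks and that
every nonzero vector lies in `63 / 3 = 21` of them. A second block inside the `4`-space `S` would
meet the given block `U₀` in a plane, so `a₃ = 1`; the block through a plane of `S` not in `U₀`
meets `S` in exactly that plane, so `a₂ = 35 - 7 = 28`. Counting the pairs `(x, U)` with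
`0 ≠ x ∈ U ⊓ S` gives `a₁ + 3 a₂ + 7 a₃ = 15 · 21`, and `a₀ + a₁ + a₂ + a₃ = 381`.
-/

open Module Submodule

section DoubleCounting

variable {α β : Type*} [Finite α]

theorem Set.sum_comp_eq_sum_range_mul_ncard (s : Set α) {d : α → ℕ} {n : ℕ}
    (hd : ∀ a ∈ s, d a < n) (f : ℕ → ℕ) :
    ∑ a ∈ s.toFinite.toFinset, f (d a) = ∑ i ∈ Finset.range n, f i * {a ∈ s | d a = i}.ncard := by
  classical
  rw [← Finset.sum_fiberwise_of_maps_to (g := d) (t := Finset.range n) (by simpa using hd)]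
  refine Finset.sum_congr rfl fun i _ => ?_
  rw [Finset.sum_congr rfl fun a ha => by rw [(Finset.mem_filter.1 ha).2], Finset.sum_const,
    smul_eq_mul, mul_comm, ← Set.ncard_coe_finset]
  congr; ext; simp

variable [Finite β]

theorem Set.sum_ncard_sep_eq_sum_ncard_sep (r : α → β → Prop) (s : Set α) (t : Set β) :
    ∑ a ∈ s.toFinite.toFinset, {b ∈ t | r a b}.ncard =
      ∑ b ∈ t.toFinite.toFinset, {a ∈ s | r a b}.ncard := by
  classical
  convert Finset.sum_card_bipartiteAbove_eq_sum_card_bipartiteBelow r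
    (s := s.toFinite.toFinset) (t := t.toFinite.toFinset) using 2 <;>
  · rw [← Set.ncard_coe_finset]; congr; ext; simp [Finset.bipartiteAbove, Finset.bipartiteBelow]

theorem Set.ncard_mul_mul_eq_ncard_mul_mul (r : α → β → Prop) {s : Set α} {t : Set β}
    {c c' m n : ℕ} (hm : ∀ a ∈ s, {b ∈ t | r a b}.ncard * c = m)
    (hn : ∀ b ∈ t, {a ∈ s | r a b}.ncard * c' = n) :
    s.ncard * m * c' = t.ncard * n * c := by
  calc s.ncard * m * c' = (∑ a ∈ s.toFinite.toFinset, {b ∈ t | r a b}.ncard * c) * c' := by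
        rw [Finset.sum_congr rfl fun a ha => hm a (by simpa using ha), Finset.sum_const,
          smul_eq_mul, ← Set.ncard_eq_toFinset_card]
    _ = (∑ b ∈ t.toFinite.toFinset, {a ∈ s | r a b}.ncard * c') * c := by
        rw [← Finset.sum_mul, ← Finset.sum_mul, Set.sum_ncard_sep_eq_sum_ncard_sep]; ring
    _ = t.ncard * n * c := by
        rw [Finset.sum_congr rfl fun b hb => hn b (by simpa using hb), Finset.sum_const,
          smul_eq_mul, ← Set.ncard_eq_toFinset_card]

end DoubleCounting

section Planes

variable {K V : Type*} [Field K] [AddCommGroup V] [Module K V]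

def planesIn (W : Submodule K V) : Set (Submodule K V) := {T | finrank K T = 2 ∧ T ≤ W}

theorem finrank_span_pair {x y : V} (hx : x ≠ 0) (hy : y ∉ K ∙ x) :
    finrank K (span K {x, y}) = 2 := by
  have hli : LinearIndependent K ![x, y] :=
    (LinearIndependent.pair_iff' hx).2 fun a h => hy (mem_span_singleton.2 ⟨a, h⟩)
  rw [← Matrix.range_cons_cons_empty x y ![], finrank_span_eq_card hli, Fintype.card_fin]

theorem span_pair_mem_planesIn {W : Submodule K V} {x y : V} (hx : x ≠ 0) (hy : y ∉ K ∙ x)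
    (hxW : x ∈ W) (hyW : y ∈ W) : span K {x, y} ∈ planesIn W :=
  ⟨finrank_span_pair hx hy, span_le.2 <| Set.insert_subset hxW (Set.singleton_subset_iff.2 hyW)⟩

theorem exists_mem_planesIn {W : Submodule K V} [FiniteDimensional K W]
    (hW : 2 ≤ finrank K W) : ∃ T, T ∈ planesIn W := by
  obtain ⟨x, hxW, hx⟩ : ∃ x ∈ W, x ≠ 0 := exists_mem_ne_zero_of_ne_bot <| by
    rintro rfl; simp at hW
  obtain ⟨y, hyW, hy⟩ : ∃ y ∈ W, y ∉ K ∙ x := SetLike.exists_of_lt <| by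
    refine lt_of_le_of_ne ((span_singleton_le_iff_mem x W).2 hxW) fun h => ?_
    have := finrank_span_singleton (K := K) hx
    rw [h] at this; omega
  exact ⟨_, span_pair_mem_planesIn hx hy hxW hyW⟩

theorem planesIn_top_sep_le (U : Submodule K V) : {T ∈ planesIn ⊤ | T ≤ U} = planesIn U :=
  Set.ext fun _ => ⟨fun ⟨⟨hT, _⟩, hTU⟩ => ⟨hT, hTU⟩, fun ⟨hT, hTU⟩ => ⟨⟨hT, le_top⟩, hTU⟩⟩

theorem le_of_finrank_inf_eq {U S : Submodule K V} [FiniteDimensional K U]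
    (h : finrank K ↥(U ⊓ S) = finrank K U) : U ≤ S :=
  inf_eq_left.1 (eq_of_le_of_finrank_le inf_le_left h.ge)

variable [Finite V]

theorem ncard_coe_submodule (W : Submodule K V) :
    (W : Set V).ncard = Nat.card K ^ finrank K W := by
  rw [← natCard_eq_pow_finrank, ← Nat.card_coe_set_eq]; rfl

theorem ncard_coe_submodule_diff_zero (W : Submodule K V) :
    ((W : Set V) \ {0}).ncard = Nat.card K ^ finrank K W - 1 := by
  rw [Set.ncard_sdiff_singleton_of_mem W.zero_mem, ncard_coe_submodule]

theorem ncard_coe_submodule_diff_span_singleton {W : Submodule K V} {x : V} (hxW : x ∈ W)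
    (hx : x ≠ 0) : ((W : Set V) \ (K ∙ x)).ncard = Nat.card K ^ finrank K W - Nat.card K := by
  rw [Set.ncard_sdiff (SetLike.coe_subset_coe.2 <| (span_singleton_le_iff_mem x W).2 hxW),
    ncard_coe_submodule, ncard_coe_submodule, finrank_span_singleton hx, pow_one]

/-- A plane through `x` is `span K {x, y}` for exactly `q ^ 2 - q` choices of `y`,
where `q = Nat.card K`. -/
theorem ncard_sep_mem_planesIn_mul {W : Submodule K V} {x : V} (hxW : x ∈ W) (hx : x ≠ 0) :
    {T ∈ planesIn W | x ∈ T}.ncard * (Nat.card K ^ 2 - Nat.card K) =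
      Nat.card K ^ finrank K W - Nat.card K := by
  have hcount := Set.ncard_mul_mul_eq_ncard_mul_mul (fun y T => span K {x, y} = T)
    (s := (W : Set V) \ (K ∙ x)) (t := {T ∈ planesIn W | x ∈ T}) (c := 1) (c' := 1) (m := 1)
    (n := Nat.card K ^ 2 - Nat.card K) ?_ ?_
  · simpa [ncard_coe_submodule_diff_span_singleton hxW hx] using hcount.symm
  · rintro y ⟨hyW, hy⟩
    rw [mul_one]
    refine Set.ncard_eq_one.2 ⟨span K {x, y}, Set.ext fun T => ⟨fun h => h.2.symm, ?_⟩⟩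
    rintro rfl
    exact ⟨⟨span_pair_mem_planesIn hx hy hxW hyW, subset_span (by simp)⟩, rfl⟩
  · rintro T ⟨⟨hT, hTW⟩, hxT⟩
    have hfib : {y ∈ (W : Set V) \ (K ∙ x) | span K {x, y} = T} = (T : Set V) \ (K ∙ x) := by
      ext y
      refine ⟨fun ⟨⟨_, hy⟩, hyT⟩ => ⟨hyT ▸ subset_span (by simp), hy⟩, fun ⟨hyT, hy⟩ => ?_⟩
      refine ⟨⟨hTW hyT, hy⟩, eq_of_le_of_finrank_le ?_ ?_⟩
      · exact span_le.2 <| Set.insert_subset hxT (Set.singleton_subset_iff.2 hyT)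
      · rw [hT, finrank_span_pair hx hy]
    rw [mul_one, hfib, ncard_coe_submodule_diff_span_singleton hxT hx, hT]

theorem ncard_planesIn_mul (W : Submodule K V) :
    (planesIn W).ncard * ((Nat.card K ^ 2 - 1) * (Nat.card K ^ 2 - Nat.card K)) =
      (Nat.card K ^ finrank K W - 1) * (Nat.card K ^ finrank K W - Nat.card K) := by
  have hcount := Set.ncard_mul_mul_eq_ncard_mul_mul (fun x T => x ∈ T) (s := (W : Set V) \ {0})
    (t := planesIn W) (c' := 1) (n := Nat.card K ^ 2 - 1)
    (fun x hx => ncard_sep_mem_planesIn_mul hx.1 hx.2) ?_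
  · rw [ncard_coe_submodule_diff_zero, mul_one] at hcount
    rw [hcount, mul_assoc]
  · rintro T ⟨hT, hTW⟩
    have : {x ∈ (W : Set V) \ {0} | x ∈ T} = (T : Set V) \ {0} := by
      ext x
      exact ⟨fun ⟨⟨_, hx⟩, hxT⟩ => ⟨hxT, hx⟩, fun ⟨hxT, hx⟩ => ⟨⟨hTW hxT, hx⟩, hxT⟩⟩
    rw [this, ncard_coe_submodule_diff_zero, hT, mul_one]

theorem sum_pow_finrank_inf_sub_one (C : Set (Submodule K V)) (S : Submodule K V) {r : ℕ}
    (hr : ∀ x : V, x ≠ 0 → {U ∈ C | x ∈ U}.ncard = r) :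
    ∑ U ∈ C.toFinite.toFinset, (Nat.card K ^ finrank K ↥(U ⊓ S) - 1) =
      (Nat.card K ^ finrank K S - 1) * r := by
  have hsum := Set.sum_ncard_sep_eq_sum_ncard_sep (fun x U => x ∈ U) ((S : Set V) \ {0}) C
  rw [Finset.sum_congr rfl fun x hx => hr x (by simp_all), Finset.sum_const, smul_eq_mul,
    ← Set.ncard_eq_toFinset_card, ncard_coe_submodule_diff_zero] at hsum
  rw [hsum]
  refine Finset.sum_congr rfl fun U _ => ?_
  rw [← ncard_coe_submodule_diff_zero]
  congr 1
  exact Set.ext fun x => ⟨fun ⟨⟨hxU, hxS⟩, hx⟩ => ⟨⟨hxS, hx⟩, hxU⟩,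
    fun ⟨⟨hxS, hx⟩, hxU⟩ => ⟨⟨hxU, hxS⟩, hx⟩⟩

end Planes

section Designs

variable {K V : Type*} [Field K] [AddCommGroup V] [Module K V]

/-- The `q`-analogue of a Steiner system `S(2, k, n)`. -/
structure IsPlaneSteinerSystem (C : Set (Submodule K V)) (k : ℕ) : Prop where
  finrank_eq : ∀ U ∈ C, finrank K U = k
  existsUnique : ∀ T : Submodule K V, finrank K T = 2 → ∃! U, U ∈ C ∧ T ≤ U

namespace IsPlaneSteinerSystem

variable {C : Set (Submodule K V)} {k : ℕ}

theorem eq_of_plane_le (hC : IsPlaneSteinerSystem C k) {T U U' : Submodule K V}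
    (hT : finrank K T = 2) (hU : U ∈ C) (hU' : U' ∈ C) (hTU : T ≤ U) (hTU' : T ≤ U') :
    U = U' :=
  (hC.existsUnique T hT).unique ⟨hU, hTU⟩ ⟨hU', hTU'⟩

theorem ncard_sep_le_eq_one (hC : IsPlaneSteinerSystem C k) {T : Submodule K V}
    (hT : finrank K T = 2) : {U ∈ C | T ≤ U}.ncard = 1 := by
  obtain ⟨U, hU, huniq⟩ := hC.existsUnique T hT
  exact Set.ncard_eq_one.2 ⟨U, Set.ext fun U' => ⟨huniq U', fun h => h ▸ hU⟩⟩

variable [Finite V]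

theorem eq_of_two_le_finrank_inf (hC : IsPlaneSteinerSystem C k) {U U' : Submodule K V}
    (hU : U ∈ C) (hU' : U' ∈ C) (h : 2 ≤ finrank K ↥(U ⊓ U')) : U = U' := by
  obtain ⟨T, hT, hTle⟩ := exists_mem_planesIn h
  exact hC.eq_of_plane_le hT hU hU' (hTle.trans inf_le_left) (hTle.trans inf_le_right)

theorem eq_of_le_of_le_of_finrank_le (hC : IsPlaneSteinerSystem C k) {S U U' : Submodule K V}
    (hU : U ∈ C) (hU' : U' ∈ C) (hUS : U ≤ S) (hU'S : U' ≤ S) (hS : finrank K S + 2 ≤ 2 * k) :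
    U = U' := by
  have hsup := finrank_mono (sup_le hUS hU'S)
  have hdim := finrank_sup_add_finrank_inf_eq U U'
  rw [hC.finrank_eq U hU, hC.finrank_eq U' hU'] at hdim
  exact hC.eq_of_two_le_finrank_inf hU hU' (by omega)

theorem ncard_mul (hC : IsPlaneSteinerSystem C k) :
    C.ncard * ((Nat.card K ^ k - 1) * (Nat.card K ^ k - Nat.card K)) =
      (Nat.card K ^ finrank K V - 1) * (Nat.card K ^ finrank K V - Nat.card K) := by
  have hcount := Set.ncard_mul_mul_eq_ncard_mul_mul (fun T U => T ≤ U) (s := planesIn ⊤) (t := C)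
    (c := 1) (m := 1) (fun T hT => by rw [mul_one, hC.ncard_sep_le_eq_one hT.1])
    (fun U hU => by rw [planesIn_top_sep_le, ncard_planesIn_mul, hC.finrank_eq U hU])
  rw [← finrank_top K V, ← ncard_planesIn_mul]
  simpa only [mul_one] using hcount.symm

theorem ncard_sep_mem_mul (hC : IsPlaneSteinerSystem C k) {x : V} (hx : x ≠ 0) :
    {U ∈ C | x ∈ U}.ncard * (Nat.card K ^ k - Nat.card K) =
      Nat.card K ^ finrank K V - Nat.card K := by
  have hcount := Set.ncard_mul_mul_eq_ncard_mul_mul (fun T U => T ≤ U)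
    (s := {T ∈ planesIn ⊤ | x ∈ T}) (t := {U ∈ C | x ∈ U}) (c := 1) (m := 1)
    (fun T hT => by
      rw [mul_one, ← hC.ncard_sep_le_eq_one hT.1.1]
      congr 1
      ext U
      exact ⟨fun ⟨⟨hU, _⟩, hTU⟩ => ⟨hU, hTU⟩, fun ⟨hU, hTU⟩ => ⟨⟨hU, hTU hT.2⟩, hTU⟩⟩)
    (fun U hU => by
      have hfib : {T ∈ {T ∈ planesIn ⊤ | x ∈ T} | T ≤ U} = {T ∈ planesIn U | x ∈ T} :=
        Set.ext fun _ => ⟨fun ⟨⟨⟨hT, _⟩, hxT⟩, hTU⟩ => ⟨⟨hT, hTU⟩, hxT⟩,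
          fun ⟨⟨hT, hTU⟩, hxT⟩ => ⟨⟨⟨hT, le_top⟩, hxT⟩, hTU⟩⟩
      rw [hfib, ncard_sep_mem_planesIn_mul hU.2 hx, hC.finrank_eq U hU.1])
  rw [← finrank_top K V, ← ncard_sep_mem_planesIn_mul (mem_top (R := K)) hx]
  simpa only [mul_one] using hcount.symm

theorem setOf_finrank_inf_eq_singleton (hC : IsPlaneSteinerSystem C k) {S U₀ : Submodule K V}
    (hU₀ : U₀ ∈ C) (hU₀S : U₀ ≤ S) (huniq : ∀ U ∈ C, U ≤ S → U = U₀) :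
    {U ∈ C | finrank K ↥(U ⊓ S) = k} = {U₀} := by
  ext U
  constructor
  · rintro ⟨hU, hUS⟩
    exact huniq U hU (le_of_finrank_inf_eq (hUS.trans (hC.finrank_eq U hU).symm))
  · rintro rfl
    exact ⟨hU₀, by rw [inf_eq_left.2 hU₀S, hC.finrank_eq U hU₀]⟩

theorem inf_eq_of_le_of_notMem_planesIn (hC : IsPlaneSteinerSystem C 3)
    {S T U U₀ : Submodule K V} (huniq : ∀ U ∈ C, U ≤ S → U = U₀) (hT : T ∈ planesIn S)
    (hTU₀ : T ∉ planesIn U₀) (hU : U ∈ C) (hTU : T ≤ U) : U ⊓ S = T := by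
  have hTle : T ≤ U ⊓ S := le_inf hTU hT.2
  have hle : finrank K ↥(U ⊓ S) ≤ 3 := hC.finrank_eq U hU ▸ finrank_mono inf_le_left
  have hne : finrank K ↥(U ⊓ S) ≠ 3 := fun h =>
    hTU₀ ⟨hT.1, huniq U hU (le_of_finrank_inf_eq (h.trans (hC.finrank_eq U hU).symm)) ▸ hTU⟩
  have hge := finrank_mono hTle
  rw [hT.1] at hge
  exact (eq_of_le_of_finrank_le hTle (by rw [hT.1]; omega)).symm

theorem ncard_setOf_finrank_inf_eq_two_add (hC : IsPlaneSteinerSystem C 3)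
    {S U₀ : Submodule K V} (hU₀ : U₀ ∈ C) (hU₀S : U₀ ≤ S) (huniq : ∀ U ∈ C, U ≤ S → U = U₀) :
    {U ∈ C | finrank K ↥(U ⊓ S) = 2}.ncard + (planesIn U₀).ncard = (planesIn S).ncard := by
  have hinj : Set.InjOn (· ⊓ S) {U ∈ C | finrank K ↥(U ⊓ S) = 2} := fun U hU U' hU' h =>
    hC.eq_of_plane_le hU.2 hU.1 hU'.1 inf_le_left (h.le.trans inf_le_left)
  have himage : (· ⊓ S) '' {U ∈ C | finrank K ↥(U ⊓ S) = 2} = planesIn S \ planesIn U₀ := by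
    ext T
    constructor
    · rintro ⟨U, ⟨hU, hUS⟩, rfl⟩
      refine ⟨⟨hUS, inf_le_right⟩, fun hle => ?_⟩
      obtain rfl := hC.eq_of_plane_le hUS hU hU₀ inf_le_left hle.2
      rw [inf_eq_left.2 hU₀S, hC.finrank_eq U hU] at hUS
      exact absurd hUS (by norm_num)
    · rintro ⟨hT, hTU₀⟩
      obtain ⟨U, ⟨hU, hTU⟩, -⟩ := hC.existsUnique T hT.1
      have hUS := hC.inf_eq_of_le_of_notMem_planesIn huniq hT hTU₀ hU hTU
      exact ⟨U, ⟨hU, hUS ▸ hT.1⟩, hUS⟩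
  have hsub : planesIn U₀ ⊆ planesIn S := fun T hT => ⟨hT.1, hT.2.trans hU₀S⟩
  rw [← hinj.ncard_image, himage, Set.ncard_sdiff hsub,
    Nat.sub_add_cancel (Set.ncard_le_ncard hsub)]

end IsPlaneSteinerSystem

end Designs

/-- Intersection vector of a solid containing a codeword, with respect to a `2`-analogue of
the Fano plane: `(a_0, a_1, a_2, a_3) = (128, 224, 28, 1)`. -/
theorem fano_analogue_intersection_vector_with_codeword
    (C : Set (Submodule (ZMod 2) (Fin 7 → ZMod 2)))
    (h3 : ∀ U ∈ C, Module.finrank (ZMod 2) U = 3)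
    (hSteiner : ∀ T : Submodule (ZMod 2) (Fin 7 → ZMod 2),
      Module.finrank (ZMod 2) T = 2 → ∃! U, U ∈ C ∧ T ≤ U)
    (S : Submodule (ZMod 2) (Fin 7 → ZMod 2)) (hS : Module.finrank (ZMod 2) S = 4)
    (hyes : ∃ U ∈ C, U ≤ S) :
    {U ∈ C | Module.finrank (ZMod 2) ↥(U ⊓ S) = 0}.ncard = 128 ∧
    {U ∈ C | Module.finrank (ZMod 2) ↥(U ⊓ S) = 1}.ncard = 224 ∧
    {U ∈ C | Module.finrank (ZMod 2) ↥(U ⊓ S) = 2}.ncard = 28 ∧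
    {U ∈ C | Module.finrank (ZMod 2) ↥(U ⊓ S) = 3}.ncard = 1 := by
  obtain ⟨U₀, hU₀, hU₀S⟩ := hyes
  have hC : IsPlaneSteinerSystem C 3 := ⟨h3, hSteiner⟩
  have hq : Nat.card (ZMod 2) = 2 := Nat.card_zmod 2
  have hV : finrank (ZMod 2) (Fin 7 → ZMod 2) = 7 := by simp
  have huniq : ∀ U ∈ C, U ≤ S → U = U₀ := fun U hU hUS =>
    hC.eq_of_le_of_le_of_finrank_le hU hU₀ hUS hU₀S (by omega)
  have hrep : ∀ x : Fin 7 → ZMod 2, x ≠ 0 → {U ∈ C | x ∈ U}.ncard = 21 := fun x hx => by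
    have := hC.ncard_sep_mem_mul hx
    rw [hq, hV] at this
    omega
  have hdim : ∀ U ∈ C, finrank (ZMod 2) ↥(U ⊓ S) < 4 := fun U hU =>
    Nat.lt_succ_of_le (h3 U hU ▸ finrank_mono inf_le_left)
  have hincidence := sum_pow_finrank_inf_sub_one C S hrep
  rw [hq, Set.sum_comp_eq_sum_range_mul_ncard C hdim (2 ^ · - 1)] at hincidence
  have htotal := Set.sum_comp_eq_sum_range_mul_ncard C hdim fun _ => 1
  have hcard := hC.ncard_mul
  have ha2 := hC.ncard_setOf_finrank_inf_eq_two_add hU₀ hU₀S huniq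
  have ha3 := congrArg Set.ncard (hC.setOf_finrank_inf_eq_singleton hU₀ hU₀S huniq)
  have hplanesU₀ := ncard_planesIn_mul U₀
  have hplanesS := ncard_planesIn_mul S
  simp only [Finset.sum_range_succ, Finset.sum_range_zero, Finset.sum_const, smul_eq_mul,
    mul_one, ← Set.ncard_eq_toFinset_card, Set.ncard_singleton, hq, hS, hV, h3 U₀ hU₀] at *
  omega
end

section
/- Let A ⊆ F_q^{m×n} be a set of matrices such that any two distinct elements A, B satisfy rank(A−B) ≥ n−k+1, where k ≤ m ≤ n. Then |A| ≤ q^{nk} (the Singleton-type bound for rank-metric codes). -/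
/-!
Keeping only the first `k` rows is injective on the code: two codewords with the same first `k`
rows differ by a matrix with at most `m - k` nonzero rows, whose rank `≤ m - k ≤ n - k` is below
the minimum distance. Hence the code is no larger than the space of `k × n` matrices.
-/

open Finset

namespace Matrix

variable {m n R : Type*} [Fintype n] [Field R]

theorem rank_le_card_of_row_eq_zero_of_notMem [Finite m] (M : Matrix m n R) (s : Finset m)
    (h : ∀ i ∉ s, M i = 0) : M.rank ≤ #s := by
  classical
  have hspan : Submodule.span R (Set.range M.row) ≤ Submodule.span R ↑(s.image M) := by
    rw [Submodule.span_le]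
    rintro _ ⟨i, rfl⟩
    by_cases hi : i ∈ s
    · exact Submodule.subset_span (mem_image_of_mem M hi)
    · simp [row, h i hi]
  calc M.rank = Module.finrank R (Submodule.span R (Set.range M.row)) :=
        M.rank_eq_finrank_span_row
    _ ≤ (↑(s.image M) : Set (n → R)).finrank R := Submodule.finrank_mono hspan
    _ ≤ #(s.image M) := finrank_span_finset_le_card _
    _ ≤ #s := card_image_le

theorem rank_sub_le_of_submatrix_eq [Fintype m] {ι : Type*} [Fintype ι] (e : ι ↪ m)
    {X Y : Matrix m n R} (h : X.submatrix e id = Y.submatrix e id) :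
    (X - Y).rank ≤ Fintype.card m - Fintype.card ι := by
  classical
  calc (X - Y).rank ≤ #(univ.map e)ᶜ := by
        refine rank_le_card_of_row_eq_zero_of_notMem _ _ fun i hi => ?_
        obtain ⟨j, -, rfl⟩ := mem_map.mp (notMem_compl.mp hi)
        ext c
        simpa [sub_eq_zero] using congrFun (congrFun h j) c
    _ = Fintype.card m - Fintype.card ι := by rw [card_compl, card_map, card_univ]

end Matrix

/-- Singleton-type bound for rank-metric codes: a set of `m × n` matrices over `F_q`
(`k ≤ m ≤ n`) with minimum rank distance at least `n - k + 1` has at most `q^{nk}` elements. -/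
theorem rank_metric_singleton_bound (F : Type*) [Field F] [Fintype F] (m n k : ℕ)
    (hkm : k ≤ m) (hmn : m ≤ n) (A : Set (Matrix (Fin m) (Fin n) F))
    (hd : ∀ X ∈ A, ∀ Y ∈ A, X ≠ Y → n - k + 1 ≤ (X - Y).rank) :
    A.ncard ≤ (Fintype.card F) ^ (n * k) := by
  have hinj : Set.InjOn (fun X : Matrix (Fin m) (Fin n) F => X.submatrix (Fin.castLEEmb hkm) id)
      A := by
    intro X hX Y hY hXY
    by_contra hne
    have hle := Matrix.rank_sub_le_of_submatrix_eq (Fin.castLEEmb hkm) hXY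
    have hge := hd X hX Y hY hne
    simp only [Fintype.card_fin] at hle
    omega
  calc A.ncard ≤ (Set.univ : Set (Matrix (Fin k) (Fin n) F)).ncard :=
        Set.ncard_le_ncard_of_injOn _ (fun _ _ => Set.mem_univ _) hinj
    _ = Fintype.card F ^ (n * k) := by
        rw [Set.ncard_univ, Matrix, Nat.card_fun, Nat.card_fun, Nat.card_fin, Nat.card_fin,
          Nat.card_eq_fintype_card, ← pow_mul, mul_comm]
end

section
/- The lifting map λ sending a matrix A ∈ F_q^{m×n} to the row space of the block matrix (I_m | A) ∈ F_q^{m×(m+n)} satisfies d_S(λ(A), λ(B)) = 2·rank(A − B) for all A, B; in particular λ is injective and each λ(A) is m-dimensional. -/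
/-!
`λ(A)` is the image of the injective map `x ↦ x (I | A) = (x, x A)`, so it has dimension `m`.
A vector `(x, x A) = (y, y B)` of `λ(A) ∩ λ(B)` has `x = y` and `x (A - B) = 0`, so the
intersection is the image of the left kernel of `A - B` and has dimension `m - rank (A - B)`.
Grassmann's formula then gives `dim (λ(A) + λ(B)) = m + rank (A - B)`, and the distance is
`2 rank (A - B)`; it vanishes only for `A = B`.
-/

/-- The lifting map: `A ∈ F^{m×n}` is sent to the row space of `(I_m | A) ⊆ F^{m+n}`. -/
noncomputable def liftMatrix {F : Type*} [Field F] {m n : ℕ} (A : Matrix (Fin m) (Fin n) F) :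
    Submodule F (Fin m ⊕ Fin n → F) :=
  LinearMap.range (Matrix.vecMulLinear (Matrix.fromCols (1 : Matrix (Fin m) (Fin m) F) A))

open Module Matrix LinearMap

namespace Matrix

theorem vecMul_fromCols_one {R m n : Type*} [Semiring R] [Fintype m] [DecidableEq m]
    (A : Matrix m n R) (x : m → R) : x ᵥ* fromCols 1 A = Sum.elim x (x ᵥ* A) := by
  rw [vecMul_fromCols, vecMul_one]

theorem vecMulLinear_fromCols_one_injective {R m n : Type*} [CommSemiring R] [Fintype m]
    [DecidableEq m] (A : Matrix m n R) :
    Function.Injective (fromCols (1 : Matrix m m R) A).vecMulLinear := by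
  intro x y hxy
  simpa [vecMul_fromCols_one] using congr_arg (· ∘ Sum.inl) hxy

variable {F m n : Type*} [Field F] [Fintype n]

theorem rank_eq_zero_iff [DecidableEq n] {M : Matrix m n F} : M.rank = 0 ↔ M = 0 := by
  rw [rank, Submodule.finrank_eq_zero, range_eq_bot, ← toLin'_apply',
    map_eq_zero_iff _ toLin'.injective]

variable [Fintype m]

theorem finrank_range_vecMulLinear (M : Matrix m n F) :
    finrank F (range M.vecMulLinear) = M.rank := by
  rw [← mulVecLin_transpose, ← rank, rank_transpose]

theorem rank_add_finrank_ker_vecMulLinear (M : Matrix m n F) :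
    M.rank + finrank F (ker M.vecMulLinear) = Fintype.card m := by
  rw [← finrank_range_vecMulLinear, finrank_range_add_finrank_ker, finrank_fintype_fun_eq_card]

end Matrix

section Lift

variable {F : Type*} [Field F] {m n : ℕ}

theorem finrank_liftMatrix (A : Matrix (Fin m) (Fin n) F) : finrank F (liftMatrix A) = m := by
  rw [liftMatrix, finrank_range_of_inj (vecMulLinear_fromCols_one_injective A),
    finrank_fin_fun]

theorem liftMatrix_inf_liftMatrix (A B : Matrix (Fin m) (Fin n) F) :
    liftMatrix A ⊓ liftMatrix B =
      (ker (A - B).vecMulLinear).map (fromCols (1 : Matrix (Fin m) (Fin m) F) A).vecMulLinear := by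
  ext v
  simp only [liftMatrix, Submodule.mem_inf, mem_range, Submodule.mem_map, mem_ker,
    vecMulLinear_apply, vecMul_fromCols_one, vecMul_sub, sub_eq_zero]
  constructor
  · rintro ⟨⟨x, rfl⟩, y, hy⟩
    obtain rfl : y = x := by simpa using congr_arg (· ∘ Sum.inl) hy
    exact ⟨y, by simpa using congr_arg (· ∘ Sum.inr) hy.symm, rfl⟩
  · rintro ⟨x, hx, rfl⟩
    exact ⟨⟨x, rfl⟩, x, by rw [hx]⟩

theorem finrank_inf_liftMatrix_add_rank (A B : Matrix (Fin m) (Fin n) F) :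
    finrank F ↥(liftMatrix A ⊓ liftMatrix B) + (A - B).rank = m := by
  rw [liftMatrix_inf_liftMatrix, ← ((ker (A - B).vecMulLinear).equivMapOfInjective _
    (vecMulLinear_fromCols_one_injective A)).finrank_eq, add_comm,
    rank_add_finrank_ker_vecMulLinear, Fintype.card_fin]

end Lift

theorem lift_is_scaled_isometry_general (F : Type*) [Field F] (m n : ℕ) :
    (∀ A B : Matrix (Fin m) (Fin n) F,
        Module.finrank F ↥(liftMatrix A ⊔ liftMatrix B) -
            Module.finrank F ↥(liftMatrix A ⊓ liftMatrix B) = 2 * (A - B).rank) ∧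
      Function.Injective (liftMatrix (F := F) (m := m) (n := n)) ∧
      ∀ A : Matrix (Fin m) (Fin n) F, Module.finrank F ↥(liftMatrix A) = m := by
  have distance (A B : Matrix (Fin m) (Fin n) F) :
      finrank F ↥(liftMatrix A ⊔ liftMatrix B) - finrank F ↥(liftMatrix A ⊓ liftMatrix B) =
        2 * (A - B).rank := by
    have hsum := Submodule.finrank_sup_add_finrank_inf_eq (liftMatrix A) (liftMatrix B)
    have hinf := finrank_inf_liftMatrix_add_rank A B
    rw [finrank_liftMatrix, finrank_liftMatrix] at hsum
    omega
  refine ⟨distance, fun A B hAB => ?_, finrank_liftMatrix⟩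
  have hrank : (A - B).rank = 0 := by
    have h := distance A B
    rw [hAB, sup_idem, inf_idem, Nat.sub_self] at h
    omega
  exact sub_eq_zero.mp (rank_eq_zero_iff.mp hrank)

/-- The lifting map `λ` satisfies `d_S(λ(A), λ(B)) = 2·rank(A-B)`; in particular it is
injective and each `λ(A)` is `m`-dimensional. -/
theorem lift_is_scaled_isometry (F : Type*) [Field F] [Fintype F] (m n : ℕ) :
    (∀ A B : Matrix (Fin m) (Fin n) F,
        Module.finrank F ↥(liftMatrix A ⊔ liftMatrix B) -
            Module.finrank F ↥(liftMatrix A ⊓ liftMatrix B) = 2 * (A - B).rank) ∧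
      Function.Injective (liftMatrix (F := F) (m := m) (n := n)) ∧
      ∀ A : Matrix (Fin m) (Fin n) F, Module.finrank F ↥(liftMatrix A) = m :=
  lift_is_scaled_isometry_general F m n
end

section
/- Let W be a 3-dimensional F_2-subspace of F_16 and for a_0, a_1 ∈ F_16 define G(a_0,a_1) = {(x, a_0 x + a_1 x^2) : x ∈ W} ⊆ W × F_16. Then the 256 subspaces G(a_0,a_1) form a (7, 256, 4; 3) subspace code: each is a 3-dimensional F_2-subspace of the 7-dimensional space W × F_16, and any two distinct ones intersect in dimension at most 1. -/
/-- The field `F_16`, a `4`-dimensional vector space over `F_2`. -/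
abbrev F16 := GaloisField 2 4

/-- The `F_2`-linear endomorphism of `F_16` induced by `a_0 x + a_1 x^2`. -/
noncomputable def lmap (a0 a1 : F16) : F16 →ₗ[ZMod 2] F16 where
  toFun x := a0 * x + a1 * x ^ 2
  map_add' x y := by
    have h : (x + y) ^ 2 = x ^ 2 + y ^ 2 := CharTwo.add_sq x y
    show a0 * (x + y) + a1 * (x + y) ^ 2 = (a0 * x + a1 * x ^ 2) + (a0 * y + a1 * y ^ 2)
    rw [h]; ring
  map_smul' c x := by
    have hc : c = 0 ∨ c = 1 := by
      fin_cases c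
      · exact Or.inl rfl
      · exact Or.inr rfl
    rcases hc with rfl | rfl <;> simp

/-- The codeword `G(a_0, a_1) = {(x, a_0 x + a_1 x^2) : x ∈ W}`, as a subspace of
`W × F_16`. -/
noncomputable def Gc (W : Submodule (ZMod 2) F16) (a0 a1 : F16) :
    Submodule (ZMod 2) (↥W × F16) :=
  LinearMap.graph ((lmap a0 a1).comp W.subtype)

/-! The intersection of the graphs of linear maps `f` and `g` is isomorphic to `ker (f - g)`.
For two codewords, `f - g` is `x ↦ c₀ x + c₁ x²` on `W` with `(c₀, c₁) ≠ 0`, whose zeros are zeros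
of a nonzero polynomial of degree at most `2`; a space over `F_2` with at most two elements has
dimension at most `1`. Injectivity follows, since equal codewords would meet in dimension `3`. -/

open LinearMap Module

namespace LinearMap

variable {R M N : Type*} [Ring R] [AddCommGroup M] [AddCommGroup N] [Module R M] [Module R N]

theorem finrank_graph (f : M →ₗ[R] N) : finrank R (graph f) = finrank R M := by
  rw [graph_eq_range_prod, finrank_range_of_inj fun _ _ h ↦ congrArg Prod.fst h]

theorem graph_inf_graph (f g : M →ₗ[R] N) :
    graph f ⊓ graph g = (ker (f - g)).map (LinearMap.id.prod f) := by
  ext ⟨x, y⟩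
  simp only [Submodule.mem_inf, mem_graph_iff, Submodule.mem_map, mem_ker, sub_apply,
    sub_eq_zero, prod_apply, Function.prod, id_coe, id_eq, Prod.mk.injEq]
  constructor
  · rintro ⟨hf, hg⟩
    exact ⟨x, hf.symm.trans hg, rfl, hf.symm⟩
  · rintro ⟨x, hfg, rfl, rfl⟩
    exact ⟨rfl, hfg⟩

theorem finrank_graph_inf_graph (f g : M →ₗ[R] N) :
    finrank R ↥(graph f ⊓ graph g) = finrank R (ker (f - g)) := by
  rw [graph_inf_graph]
  exact (Submodule.equivMapOfInjective _ (fun _ _ h ↦ congrArg Prod.fst h) _).symm.finrank_eq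

theorem finrank_ker_comp_subtype_le [StrongRankCondition R] [IsNoetherian R M]
    (f : M →ₗ[R] N) (p : Submodule R M) :
    finrank R (ker (f.comp p.subtype)) ≤ finrank R (ker f) := by
  rw [ker_comp, ← Submodule.finrank_map_subtype_eq, Submodule.map_comap_subtype]
  exact Submodule.finrank_mono inf_le_right

end LinearMap

theorem Module.finrank_le_one_of_natCard_le {K V : Type*} [Field K] [Finite K] [AddCommGroup V]
    [Module K V] [Module.Finite K V] (h : Nat.card V ≤ Nat.card K) : finrank K V ≤ 1 := by
  rw [natCard_eq_pow_finrank (K := K)] at h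
  exact (Nat.pow_le_pow_iff_right Finite.one_lt_card).mp (by simpa using h)

theorem Set.ncard_setOf_mul_add_mul_sq_eq_zero_le_two {F : Type*} [Field F] {c₀ c₁ : F}
    (hc : c₀ ≠ 0 ∨ c₁ ≠ 0) : {x : F | c₀ * x + c₁ * x ^ 2 = 0}.ncard ≤ 2 := by
  have hsub : {x : F | c₀ * x + c₁ * x ^ 2 = 0} ⊆ {0, -c₀ / c₁} := by
    intro x (hx : c₀ * x + c₁ * x ^ 2 = 0)
    have hfactor : x * (c₀ + c₁ * x) = 0 := by linear_combination hx
    rcases mul_eq_zero.mp hfactor with rfl | hlin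
    · exact Or.inl rfl
    · have hc₁ : c₁ ≠ 0 := by
        rintro rfl
        exact hc.elim (· (by simpa using hlin)) (· rfl)
      refine Or.inr (Set.mem_singleton_iff.mpr ?_)
      field_simp
      linear_combination hlin
  calc _ ≤ ({0, -c₀ / c₁} : Set F).ncard := ncard_le_ncard hsub (toFinite _)
    _ ≤ ({-c₀ / c₁} : Set F).ncard + 1 := ncard_insert_le _ _
    _ = 2 := by rw [ncard_singleton]

theorem lmap_sub_lmap (a₀ a₁ b₀ b₁ : F16) : lmap a₀ a₁ - lmap b₀ b₁ = lmap (a₀ - b₀) (a₁ - b₁) := by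
  ext x
  change (a₀ * x + a₁ * x ^ 2) - (b₀ * x + b₁ * x ^ 2) = (a₀ - b₀) * x + (a₁ - b₁) * x ^ 2
  ring

theorem finrank_ker_lmap_le_one {c₀ c₁ : F16} (hc : c₀ ≠ 0 ∨ c₁ ≠ 0) :
    finrank (ZMod 2) (ker (lmap c₀ c₁)) ≤ 1 := by
  refine finrank_le_one_of_natCard_le ?_
  rw [Nat.card_zmod]
  exact (Nat.card_coe_set_eq _).trans_le (Set.ncard_setOf_mul_add_mul_sq_eq_zero_le_two hc)

theorem finrank_Gc (W : Submodule (ZMod 2) F16) (a₀ a₁ : F16) :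
    finrank (ZMod 2) (Gc W a₀ a₁) = finrank (ZMod 2) W :=
  finrank_graph _

theorem finrank_Gc_inf_Gc_le_one (W : Submodule (ZMod 2) F16) {a₀ a₁ b₀ b₁ : F16}
    (hne : (a₀, a₁) ≠ (b₀, b₁)) : finrank (ZMod 2) ↥(Gc W a₀ a₁ ⊓ Gc W b₀ b₁) ≤ 1 := by
  have hc : a₀ - b₀ ≠ 0 ∨ a₁ - b₁ ≠ 0 := by
    simpa only [sub_ne_zero, ne_eq, Prod.mk.injEq, not_and_or] using hne
  rw [Gc, Gc, finrank_graph_inf_graph, ← sub_comp, lmap_sub_lmap]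
  exact (finrank_ker_comp_subtype_le _ W).trans (finrank_ker_lmap_le_one hc)

/-- The `256` subspaces `G(a_0,a_1)` form a `(7, 256, 4; 3)` subspace code in the
`7`-dimensional space `W × F_16`. -/
theorem lifted_gabidulin_code (W : Submodule (ZMod 2) F16)
    (hW : Module.finrank (ZMod 2) W = 3) :
    Module.finrank (ZMod 2) (↥W × F16) = 7 ∧
      (∀ a0 a1 : F16, Module.finrank (ZMod 2) ↥(Gc W a0 a1) = 3) ∧
      Function.Injective (fun p : F16 × F16 => Gc W p.1 p.2) ∧
      (Set.range fun p : F16 × F16 => Gc W p.1 p.2).ncard = 256 ∧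
      ∀ a0 a1 b0 b1 : F16, (a0, a1) ≠ (b0, b1) →
        Module.finrank (ZMod 2) ↥(Gc W a0 a1 ⊓ Gc W b0 b1) ≤ 1 := by
  have hrank (a₀ a₁ : F16) : finrank (ZMod 2) (Gc W a₀ a₁) = 3 := (finrank_Gc W a₀ a₁).trans hW
  have hinj : Function.Injective fun p : F16 × F16 ↦ Gc W p.1 p.2 := by
    rintro ⟨a₀, a₁⟩ ⟨b₀, b₁⟩ heq
    by_contra hne
    have hle := finrank_Gc_inf_Gc_le_one W hne
    rw [show Gc W a₀ a₁ = Gc W b₀ b₁ from heq, inf_idem, hrank] at hle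
    omega
  refine ⟨?_, hrank, hinj, ?_, fun _ _ _ _ ↦ finrank_Gc_inf_Gc_le_one W⟩
  · rw [finrank_prod, hW, GaloisField.finrank 2 four_ne_zero]
  · rw [← Nat.card_coe_set_eq, Nat.card_range_of_injective hinj, Nat.card_prod,
      GaloisField.card 2 4 four_ne_zero]
    norm_num
end

section
/- The Gabidulin code G = {a_0x + a_1x^2 : a_0,a_1 ∈ F_16} admits a partition into {0}, the set F_16^× · x of nonzero maps x ↦ ax, the set F_16^× · x^2 of nonzero maps x ↦ ax^2, and the 15 sets {(u^2 x + u x^2)·v : u ∈ F_16^×} for v ∈ F_16^×; in particular the 15 cosets ∪_{v} (u_0^2 x + u_0 x^2 + T)v with Tr(u_0)=1 are pairwise disjoint and consist of 120 elements. -/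
/-- The absolute trace `F_16 → F_2 ⊆ F_16`, `Tr(u) = u + u^2 + u^4 + u^8`. -/
noncomputable def tr (u : F16) : F16 := u + u ^ 2 + u ^ 4 + u ^ 8

/-- The coset `(u_0^2 x + u_0 x^2 + T)·v` of the Gabidulin code, identified with a subset of
the coefficient space `F_16 × F_16`. -/
def coset (u0 v : F16) : Set (F16 × F16) :=
  {p | ∃ w : F16, tr w = 0 ∧ p = ((u0 + w) ^ 2 * v, (u0 + w) * v)}

section Parametrisation

variable {K : Type*}

/-- The coefficients of `(u^2 x + u x^2)·v`. -/
def uvCoeffs [Mul K] [Pow K ℕ] (u v : K) : K × K := (u ^ 2 * v, u * v)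

variable [Field K]

theorem eq_and_eq_of_uvCoeffs_eq {u v u' v' : K} (hu : u ≠ 0) (hv : v ≠ 0)
    (h : uvCoeffs u v = uvCoeffs u' v') : u = u' ∧ v = v' := by
  simp only [uvCoeffs, Prod.mk.injEq] at h
  obtain ⟨h₁, h₂⟩ := h
  have hu' : u = u' := mul_right_cancel₀ (mul_ne_zero hu hv) <| calc
    u * (u * v) = u' * (u' * v') := by linear_combination h₁
    _ = u' * (u * v) := by rw [h₂]
  subst hu'
  exact ⟨rfl, mul_left_cancel₀ hu h₂⟩

theorem injOn_uncurry_uvCoeffs :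
    Set.InjOn (Function.uncurry (uvCoeffs (K := K))) {q | q.1 ≠ 0 ∧ q.2 ≠ 0} :=
  fun _ hq _ _ h ↦ Prod.ext_iff.mpr (eq_and_eq_of_uvCoeffs_eq hq.1 hq.2 h)

theorem existsUnique_uvCoeffs_eq {a₀ a₁ : K} (h₀ : a₀ ≠ 0) (h₁ : a₁ ≠ 0) :
    ∃! uv : K × K, uv.1 ≠ 0 ∧ uv.2 ≠ 0 ∧ a₀ = uv.1 ^ 2 * uv.2 ∧ a₁ = uv.1 * uv.2 := by
  refine ⟨(a₀ / a₁, a₁ ^ 2 / a₀), ⟨by positivity, by positivity, by field_simp, by field_simp⟩, ?_⟩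
  rintro ⟨u, v⟩ ⟨hu, hv, rfl, rfl⟩
  refine Prod.ext_iff.mpr (eq_and_eq_of_uvCoeffs_eq hu hv ?_)
  simp only [uvCoeffs]
  field_simp

theorem eq_zero_or_axis_or_uvCoeffs (p : K × K) :
    p = 0 ∨ (∃ a : K, a ≠ 0 ∧ p = (a, 0)) ∨ (∃ a : K, a ≠ 0 ∧ p = (0, a)) ∨
      ∃ u : K, u ≠ 0 ∧ ∃ v : K, v ≠ 0 ∧ p = uvCoeffs u v := by
  obtain ⟨a₀, a₁⟩ := p
  rcases eq_or_ne a₀ 0 with rfl | h₀ <;> rcases eq_or_ne a₁ 0 with rfl | h₁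
  · exact .inl rfl
  · exact .inr <| .inr <| .inl ⟨a₁, h₁, rfl⟩
  · exact .inr <| .inl ⟨a₀, h₀, rfl⟩
  · obtain ⟨⟨u, v⟩, ⟨hu, hv, rfl, rfl⟩, -⟩ := existsUnique_uvCoeffs_eq h₀ h₁
    exact .inr <| .inr <| .inr ⟨u, hu, v, hv, rfl⟩

end Parametrisation

theorem F16.natCard : Nat.card F16 = 16 :=
  GaloisField.card 2 4 (by norm_num)

theorem F16.pow_sixteen (x : F16) : x ^ 16 = x := by
  let := Fintype.ofFinite F16
  simpa [← Nat.card_eq_fintype_card, F16.natCard] using FiniteField.pow_card x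

theorem F16.ncard_setOf_ne_zero : {v : F16 | v ≠ 0}.ncard = 15 := by
  have := Set.ncard_add_ncard_compl ({0} : Set F16)
  rw [Set.ncard_singleton, F16.natCard] at this
  change ({0}ᶜ : Set F16).ncard = 15
  omega

theorem tr_add (a b : F16) : tr (a + b) = tr a + tr b := by
  have h₂ : (a + b) ^ 2 = a ^ 2 + b ^ 2 := add_pow_char_pow a b 2 1
  have h₄ : (a + b) ^ 4 = a ^ 4 + b ^ 4 := add_pow_char_pow a b 2 2
  have h₈ : (a + b) ^ 8 = a ^ 8 + b ^ 8 := add_pow_char_pow a b 2 3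
  simp only [tr, h₂, h₄, h₈]
  ring

theorem isIdempotentElem_tr (u : F16) : IsIdempotentElem (tr u) := by
  simp only [IsIdempotentElem, ← sq, tr, CharTwo.add_sq, ← pow_mul]
  rw [show 8 * 2 = 16 from rfl, F16.pow_sixteen]
  ring

theorem tr_eq_zero_or_eq_one (u : F16) : tr u = 0 ∨ tr u = 1 :=
  IsIdempotentElem.iff_eq_zero_or_one.mp (isIdempotentElem_tr u)

theorem ne_zero_of_tr_eq_one {u : F16} (h : tr u = 1) : u ≠ 0 := by
  rintro rfl
  simp [tr] at h

section TraceOne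

variable {u0 : F16}

theorem tr_add_eq_one_iff (hu0 : tr u0 = 1) (w : F16) : tr (u0 + w) = 1 ↔ tr w = 0 := by
  rw [tr_add, hu0, add_eq_left]

theorem ncard_setOf_tr_eq_one (hu0 : tr u0 = 1) : {u : F16 | tr u = 1}.ncard = 8 := by
  have hcompl : {u : F16 | tr u = 1}ᶜ = {u | tr u = 0} := by
    ext u
    rcases tr_eq_zero_or_eq_one u with h | h <;> simp [h]
  have htranslate : {w : F16 | tr w = 0}.ncard = {u : F16 | tr u = 1}.ncard := by
    rw [← Set.ncard_preimage_of_injective_subset_range (s := {u : F16 | tr u = 1})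
      (add_right_injective u0) (by simp [(add_left_surjective u0).range_eq])]
    exact congrArg Set.ncard (Set.ext fun w ↦ (tr_add_eq_one_iff hu0 w).symm)
  have := Set.ncard_add_ncard_compl {u : F16 | tr u = 1}
  rw [hcompl, htranslate, F16.natCard] at this
  omega

theorem coset_eq_image (hu0 : tr u0 = 1) (v : F16) :
    coset u0 v = (uvCoeffs · v) '' {u | tr u = 1} := by
  ext p
  constructor
  · rintro ⟨w, hw, rfl⟩
    exact ⟨u0 + w, (tr_add_eq_one_iff hu0 w).2 hw, rfl⟩
  · rintro ⟨u, hu, rfl⟩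
    refine ⟨u0 + u, (tr_add_eq_one_iff hu0 _).1 ?_, ?_⟩
    · rwa [CharTwo.add_cancel_left]
    · rw [CharTwo.add_cancel_left]
      rfl

theorem disjoint_coset (hu0 : tr u0 = 1) {v v' : F16} (hv' : v' ≠ 0) (hvv' : v ≠ v') :
    Disjoint (coset u0 v) (coset u0 v') := by
  rw [coset_eq_image hu0, coset_eq_image hu0, Set.disjoint_left]
  rintro _ ⟨u, -, rfl⟩ ⟨u', hu', h⟩
  exact hvv' (eq_and_eq_of_uvCoeffs_eq (ne_zero_of_tr_eq_one hu') hv' h).2.symm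

theorem iUnion_coset (hu0 : tr u0 = 1) :
    ⋃ v ∈ {v : F16 | v ≠ 0}, coset u0 v =
      Function.uncurry uvCoeffs '' ({u | tr u = 1} ×ˢ {v | v ≠ 0}) := by
  simp_rw [coset_eq_image hu0]
  rw [Set.iUnion_image_right, Set.image_uncurry_prod]

theorem ncard_iUnion_coset (hu0 : tr u0 = 1) :
    (⋃ v ∈ {v : F16 | v ≠ 0}, coset u0 v).ncard = 120 := by
  have hsub : {u | tr u = 1} ×ˢ {v | v ≠ 0} ⊆ {q : F16 × F16 | q.1 ≠ 0 ∧ q.2 ≠ 0} :=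
    fun q hq ↦ ⟨ne_zero_of_tr_eq_one hq.1, hq.2⟩
  rw [iUnion_coset hu0, (injOn_uncurry_uvCoeffs.mono hsub).ncard_image, Set.ncard_prod,
    ncard_setOf_tr_eq_one hu0, F16.ncard_setOf_ne_zero]

end TraceOne

/-- The Gabidulin code `G` (identified with `F_16 × F_16`) is partitioned into `{0}`,
`F_16^× · x`, `F_16^× · x^2` and the `15` sets `{(u^2 x + u x^2)v : u ∈ F_16^×}`,
`v ∈ F_16^×`; in particular, for `Tr(u_0) = 1` the `15` cosets `(u_0^2 x + u_0 x^2 + T)v`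
are pairwise disjoint and together consist of `120` elements. -/
theorem gabidulin_partition :
    (∀ p : F16 × F16,
        p = 0 ∨ (∃ a : F16, a ≠ 0 ∧ p = (a, 0)) ∨ (∃ a : F16, a ≠ 0 ∧ p = (0, a)) ∨
          ∃ u : F16, u ≠ 0 ∧ ∃ v : F16, v ≠ 0 ∧ p = (u ^ 2 * v, u * v)) ∧
      (∀ a0 a1 : F16, a0 ≠ 0 → a1 ≠ 0 →
        ∃! uv : F16 × F16, uv.1 ≠ 0 ∧ uv.2 ≠ 0 ∧ a0 = uv.1 ^ 2 * uv.2 ∧ a1 = uv.1 * uv.2) ∧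
      ∀ u0 : F16, tr u0 = 1 →
        (∀ v v' : F16, v ≠ 0 → v' ≠ 0 → v ≠ v' → Disjoint (coset u0 v) (coset u0 v')) ∧
          (⋃ v ∈ {v : F16 | v ≠ 0}, coset u0 v).ncard = 120 :=
  ⟨eq_zero_or_axis_or_uvCoeffs, fun _ _ ↦ existsUnique_uvCoeffs_eq,
    fun _ hu0 ↦ ⟨fun _ _ _ hv' hvv' ↦ disjoint_coset hu0 hv' hvv', ncard_iUnion_coset hu0⟩⟩
end
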